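/- A set S of monic polynomials in D(X) is a Gröbner–Shirshov basis if and only if for all f, g ∈ S: (i) whenever w = d^ī(f̄) = a·d^j̄(ḡ)·b for some a, b ∈ T, one has D^ī(f) − a·D^j̄(g)·b ≡ 0 mod (S, w); and (ii) whenever w = d^ī(f̄)·b = a·d^j̄(ḡ) with a, b ≠ 1 and |f̄| + |ḡ| > |w|, one has D^ī(f)·b − a·D^j̄(g) ≡ 0 mod (S, w). -/

import Mathlib

/-- A letter `D^ī(x)` of the free differential algebra: the word `ī` of operator
indices together with the generator `x`. -/
abbrev Letter (J X : Type*) := List J × X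

variable {k J X : Type*} [CommRing k]

/-- The monomial of `D(X) = k⟨(D^ω(X))^*⟩` corresponding to a word `u ∈ T`. -/
noncomputable def monoW (u : List (Letter J X)) : MonoidAlgebra k (FreeMonoid (Letter J X)) :=
  MonoidAlgebra.single (FreeMonoid.ofList u) 1

/-- Action of the derivation `D_j` on a word, defined by the Leibniz rule. -/
noncomputable def derivMon (j : J) : List (Letter J X) → MonoidAlgebra k (FreeMonoid (Letter J X))
  | [] => 0
  | (a, x) :: v =>
      monoW ((j :: a, x) :: v) + monoW [(a, x)] * derivMon j v

/-- The derivation `D_j` on the free differential algebra `D(X)`. -/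
noncomputable def Dop (j : J) :
    MonoidAlgebra k (FreeMonoid (Letter J X)) →ₗ[k] MonoidAlgebra k (FreeMonoid (Letter J X)) :=
  (Finsupp.lsum k fun (u : FreeMonoid (Letter J X)) =>
    LinearMap.toSpanSingleton k (MonoidAlgebra k (FreeMonoid (Letter J X))) (derivMon j u.toList)) ∘ₗ
    (MonoidAlgebra.coeffLinearEquiv k).toLinearMap

/-- The composite operator `D^j̄ = D_{j₁} ∘ ⋯ ∘ D_{jₙ}`. -/
noncomputable def Dops (jb : List J) :
    MonoidAlgebra k (FreeMonoid (Letter J X)) →ₗ[k] MonoidAlgebra k (FreeMonoid (Letter J X)) :=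
  jb.foldr (fun j m => (Dop j).comp m) LinearMap.id

/-- `d^j̄(u)`: prepend the operator word `j̄` to the first letter of `u`. -/
def dHat (jb : List J) : List (Letter J X) → List (Letter J X)
  | [] => []
  | (a, x) :: v => (jb ++ a, x) :: v

/-- Coefficient of the word `u` in `f ∈ D(X)`. -/
noncomputable def coeffW (f : MonoidAlgebra k (FreeMonoid (Letter J X)))
    (u : List (Letter J X)) : k := f.coeff (FreeMonoid.ofList u)

section Order
variable [LinearOrder J] [LinearOrder X]

/-- The order on letters: compare `wt(D^ī(x)) = (x; m, i₁, …, i_m)` lexicographically. -/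
def LetterLt (a b : Letter J X) : Prop :=
  a.2 < b.2 ∨ (a.2 = b.2 ∧ (a.1.length < b.1.length ∨
    (a.1.length = b.1.length ∧ List.Lex (· < ·) a.1 b.1)))

/-- The deg-lex order on words: first by length, then lexicographically. -/
def DegLexLt (u v : List (Letter J X)) : Prop :=
  u.length < v.length ∨ (u.length = v.length ∧ List.Lex LetterLt u v)

/-- `u` is the leading term of `f`. -/
def IsLT (f : MonoidAlgebra k (FreeMonoid (Letter J X))) (u : List (Letter J X)) : Prop :=
  coeffW f u ≠ 0 ∧ ∀ v, coeffW f v ≠ 0 → v ≠ u → DegLexLt v u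

/-- `f` is monic with leading term `u`. -/
def MonicW (f : MonoidAlgebra k (FreeMonoid (Letter J X))) (u : List (Letter J X)) : Prop :=
  IsLT f u ∧ coeffW f u = 1

end Order

/-- Membership in the `D`-ideal generated by `S`. -/
inductive InDIdeal (S : Set (MonoidAlgebra k (FreeMonoid (Letter J X)))) :
    MonoidAlgebra k (FreeMonoid (Letter J X)) → Prop
  | of : ∀ s ∈ S, InDIdeal S s
  | zero : InDIdeal S 0
  | add : ∀ {a b}, InDIdeal S a → InDIdeal S b → InDIdeal S (a + b)
  | smul : ∀ (c : k) {a}, InDIdeal S a → InDIdeal S (c • a)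
  | mul_left : ∀ (g) {a}, InDIdeal S a → InDIdeal S (g * a)
  | mul_right : ∀ (g) {a}, InDIdeal S a → InDIdeal S (a * g)
  | deriv : ∀ (j : J) {a}, InDIdeal S a → InDIdeal S (Dop j a)

/-- `(S,𝒟)`-words: `a · D^j̄(s) · b` with `s ∈ S`. -/
def IsSDWord (S : Set (MonoidAlgebra k (FreeMonoid (Letter J X))))
    (g : MonoidAlgebra k (FreeMonoid (Letter J X))) : Prop :=
  ∃ (a b : List (Letter J X)) (jb : List J), ∃ s ∈ S, g = monoW a * Dops jb s * monoW b

section Order2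
variable [LinearOrder J] [LinearOrder X]

/-- `f ≡ 0 mod (S, w)`: `f` is a linear combination of `(S,𝒟)`-words with leading term `< w`. -/
def TrivMod (S : Set (MonoidAlgebra k (FreeMonoid (Letter J X))))
    (w : List (Letter J X)) (f : MonoidAlgebra k (FreeMonoid (Letter J X))) : Prop :=
  f ∈ Submodule.span k {g | IsSDWord S g ∧ ∃ l, IsLT g l ∧ DegLexLt l w}

/-- `S` is a Gröbner–Shirshov basis: all compositions of elements of `S` are trivial. -/
def IsGSB (S : Set (MonoidAlgebra k (FreeMonoid (Letter J X)))) : Prop :=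
  ∀ f ∈ S, ∀ g ∈ S, ∀ fb gb, MonicW f fb → MonicW g gb →
    (∀ a b jb, gb ≠ [] → fb = a ++ dHat jb gb ++ b →
        TrivMod S fb (f - monoW a * Dops jb g * monoW b)) ∧
    (∀ ib b, fb ≠ [] → dHat ib fb = gb ++ b →
        TrivMod S (dHat ib fb) (Dops ib f - g * monoW b)) ∧
    (∀ a b jb, a ≠ [] → b ≠ [] → fb ≠ [] → gb ≠ [] →
        fb ++ b = a ++ dHat jb gb → (fb ++ b).length < fb.length + gb.length →
        TrivMod S (fb ++ b) (f * monoW b - monoW a * Dops jb g))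

/-- `Irr(S)`: words containing no subword `d^ī(s̄)` with `s ∈ S`. -/
def Irr (S : Set (MonoidAlgebra k (FreeMonoid (Letter J X)))) : Set (List (Letter J X)) :=
  {u | ¬ ∃ (a b : List (Letter J X)) (ib : List J), ∃ s ∈ S, ∃ sb, IsLT s sb ∧
        u = a ++ dHat ib sb ++ b}

end Order2

/-- The `D`-ideal generated by `S`, as a `k`-submodule of `D(X)`. -/
noncomputable def DIdealSub (S : Set (MonoidAlgebra k (FreeMonoid (Letter J X)))) :
    Submodule k (MonoidAlgebra k (FreeMonoid (Letter J X))) where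
  carrier := {f | InDIdeal S f}
  add_mem' := fun h1 h2 => InDIdeal.add h1 h2
  zero_mem' := InDIdeal.zero
  smul_mem' := fun c _ h => InDIdeal.smul c h

section Aux
open MonoidAlgebra

variable {k J X : Type*} [CommRing k]

lemma monoW_nil : (monoW [] : MonoidAlgebra k (FreeMonoid (Letter J X))) = 1 := rfl

lemma monoW_append (u v : List (Letter J X)) :
    (monoW (u ++ v) : MonoidAlgebra k (FreeMonoid (Letter J X))) = monoW u * monoW v := by
  simp [monoW, MonoidAlgebra.single_mul_single]

/-- Apply the operator `j` to the letter at position `i`. -/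
def applyAt (j : J) : ℕ → List (Letter J X) → List (Letter J X)
  | _, [] => []
  | 0, (a, x) :: v => (j :: a, x) :: v
  | n+1, l :: v => l :: applyAt j n v

@[simp] lemma applyAt_nil (j : J) (i : ℕ) : applyAt j i ([] : List (Letter J X)) = [] := by
  cases i <;> rfl

@[simp] lemma length_applyAt (j : J) : ∀ (i : ℕ) (u : List (Letter J X)),
    (applyAt j i u).length = u.length
  | _, [] => by simp
  | 0, (a, x) :: v => rfl
  | n+1, l :: v => by simp [applyAt, length_applyAt j n v]

lemma applyAt_append_left (j : J) : ∀ (i : ℕ) (u v : List (Letter J X)), i < u.length →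
    applyAt j i (u ++ v) = applyAt j i u ++ v
  | _, [], _, h => by simp at h
  | 0, (a, x) :: u, v, _ => rfl
  | n+1, l :: u, v, h => by
      show l :: applyAt j n (u ++ v) = (l :: applyAt j n u) ++ v
      rw [applyAt_append_left j n u v (by simp at h; omega)]
      rfl

lemma applyAt_append_right (j : J) : ∀ (u : List (Letter J X)) (i : ℕ) (v : List (Letter J X)),
    applyAt j (u.length + i) (u ++ v) = u ++ applyAt j i v
  | [], i, v => by simp
  | l :: u, i, v => by
      simp only [List.length_cons, List.cons_append]
      have : u.length + 1 + i = (u.length + i) + 1 := by omega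
      rw [this]
      show l :: applyAt j (u.length + i) (u ++ v) = l :: (u ++ applyAt j i v)
      rw [applyAt_append_right j u i v]

lemma derivMon_eq (j : J) : ∀ (u : List (Letter J X)),
    (derivMon j u : MonoidAlgebra k (FreeMonoid (Letter J X))) =
      ∑ i ∈ Finset.range u.length, monoW (applyAt j i u)
  | [] => by simp [derivMon]
  | (a, x) :: v => by
      rw [derivMon, derivMon_eq j v, Finset.mul_sum, List.length_cons,
        Finset.sum_range_succ', add_comm]
      congr 1
      apply Finset.sum_congr rfl
      intro i _
      rw [show applyAt j (i + 1) ((a, x) :: v) = [((a, x) : Letter J X)] ++ applyAt j i v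
        from rfl, ← monoW_append]

@[simp] lemma dHat_nil_ops (u : List (Letter J X)) : dHat ([] : List J) u = u := by
  cases u with
  | nil => rfl
  | cons l v => cases l; simp [dHat]

@[simp] lemma dHat_nil (jb : List J) : dHat jb ([] : List (Letter J X)) = [] := rfl

lemma dHat_single (j : J) (u : List (Letter J X)) : dHat [j] u = applyAt j 0 u := by
  cases u with
  | nil => rfl
  | cons l v => cases l; rfl

lemma dHat_cons (i : J) (ib : List J) (u : List (Letter J X)) :
    dHat (i :: ib) u = dHat [i] (dHat ib u) := by
  cases u with
  | nil => rfl
  | cons l v => cases l; simp [dHat]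

@[simp] lemma length_dHat (jb : List J) (u : List (Letter J X)) :
    (dHat jb u).length = u.length := by
  cases u with
  | nil => rfl
  | cons l v => cases l; simp [dHat]

lemma dHat_ne_nil {jb : List J} {u : List (Letter J X)} (h : u ≠ []) : dHat jb u ≠ [] := by
  cases u with
  | nil => exact absurd rfl h
  | cons l v => cases l; simp [dHat]

lemma dHat_append (jb : List J) {u : List (Letter J X)} (v : List (Letter J X)) (h : u ≠ []) :
    dHat jb (u ++ v) = dHat jb u ++ v := by
  cases u with
  | nil => exact absurd rfl h
  | cons l w => cases l; simp [dHat]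

end Aux
section Aux2
open MonoidAlgebra
open scoped Classical

variable {k J X : Type*} [CommRing k]

lemma Dop_single (j : J) (u : FreeMonoid (Letter J X)) (c : k) :
    Dop j (MonoidAlgebra.single u c) = c • derivMon j u.toList := by
  have h : Dop j (MonoidAlgebra.single u c) = (Finsupp.single u c).sum
      fun u' m => m • derivMon j (FreeMonoid.toList u') := rfl
  rw [h, Finsupp.sum_single_index (by simp)]

lemma Dop_monoW (j : J) (u : List (Letter J X)) :
    Dop j (monoW u : MonoidAlgebra k (FreeMonoid (Letter J X))) = derivMon j u := by
  rw [monoW, Dop_single, one_smul]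
  rfl

lemma derivMon_append (j : J) : ∀ (u v : List (Letter J X)),
    (derivMon j (u ++ v) : MonoidAlgebra k (FreeMonoid (Letter J X))) =
      derivMon j u * monoW v + monoW u * derivMon j v
  | [], v => by simp [derivMon, monoW_nil]
  | (a, x) :: u, v => by
      show (derivMon j (((a,x) :: u) ++ v) : MonoidAlgebra k (FreeMonoid (Letter J X))) = _
      rw [List.cons_append, derivMon, derivMon, derivMon_append j u v,
        show ((j :: a, x) :: (u ++ v) : List (Letter J X)) = ((j :: a, x) :: u) ++ v from rfl,
        show ((a, x) :: u : List (Letter J X)) = [((a,x) : Letter J X)] ++ u from rfl]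
      rw [monoW_append, monoW_append]
      noncomm_ring

lemma Dop_mul (j : J) (f g : MonoidAlgebra k (FreeMonoid (Letter J X))) :
    Dop j (f * g) = Dop j f * g + f * Dop j g := by
  induction f using MonoidAlgebra.induction_linear with
  | zero => simp
  | add p q hp hq => simp only [add_mul, map_add, hp, hq]; abel
  | single u c =>
    induction g using MonoidAlgebra.induction_linear with
    | zero => simp
    | add p q hp hq => simp only [mul_add, map_add, hp, hq]; abel
    | single v d =>
      rw [MonoidAlgebra.single_mul_single, Dop_single, Dop_single, Dop_single]
      have htl : FreeMonoid.toList (u * v) = FreeMonoid.toList u ++ FreeMonoid.toList v := rfl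
      rw [htl, derivMon_append]
      have hu : (MonoidAlgebra.single u c : MonoidAlgebra k (FreeMonoid (Letter J X)))
          = c • monoW (FreeMonoid.toList u) := by
        rw [monoW, FreeMonoid.ofList_toList, MonoidAlgebra.smul_single', mul_one]
      have hv : (MonoidAlgebra.single v d : MonoidAlgebra k (FreeMonoid (Letter J X)))
          = d • monoW (FreeMonoid.toList v) := by
        rw [monoW, FreeMonoid.ofList_toList, MonoidAlgebra.smul_single', mul_one]
      rw [hu, hv]
      simp only [smul_mul_assoc, mul_smul_comm, smul_smul, smul_add, mul_comm d c]

@[simp] lemma Dops_nil (f : MonoidAlgebra k (FreeMonoid (Letter J X))) :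
    Dops ([] : List J) f = f := rfl

lemma Dops_cons (j : J) (jb : List J) (f : MonoidAlgebra k (FreeMonoid (Letter J X))) :
    Dops (j :: jb) f = Dop j (Dops jb f) := rfl

lemma Dop_one (j : J) : Dop j (1 : MonoidAlgebra k (FreeMonoid (Letter J X))) = 0 := by
  rw [← monoW_nil, Dop_monoW]; rfl

lemma coeffW_monoW (u v : List (Letter J X)) [Decidable (v = u)] :
    coeffW (monoW u : MonoidAlgebra k (FreeMonoid (Letter J X))) v
      = if v = u then (1 : k) else 0 := by
  by_cases h : v = u
  · subst h; rw [if_pos rfl]; simp [coeffW, monoW]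
  · rw [if_neg h]; simp only [coeffW, monoW, MonoidAlgebra.coeff_single]; rw [Finsupp.single_apply, if_neg]
    intro e
    have h2 : u = v := by
      have h3 := congrArg FreeMonoid.toList e
      simpa using h3
    exact h h2.symm

@[simp] lemma coeffW_add (f g : MonoidAlgebra k (FreeMonoid (Letter J X)))
    (u : List (Letter J X)) : coeffW (f + g) u = coeffW f u + coeffW g u := by simp [coeffW]

@[simp] lemma coeffW_sub (f g : MonoidAlgebra k (FreeMonoid (Letter J X)))
    (u : List (Letter J X)) : coeffW (f - g) u = coeffW f u - coeffW g u := by simp [coeffW]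

@[simp] lemma coeffW_smul (c : k) (f : MonoidAlgebra k (FreeMonoid (Letter J X)))
    (u : List (Letter J X)) : coeffW (c • f) u = c * coeffW f u := by simp [coeffW]

@[simp] lemma coeffW_zero (u : List (Letter J X)) :
    coeffW (0 : MonoidAlgebra k (FreeMonoid (Letter J X))) u = 0 := by simp [coeffW]

lemma coeffW_sum {α : Type*} (s : Finset α)
    (F : α → MonoidAlgebra k (FreeMonoid (Letter J X))) (u : List (Letter J X)) :
    coeffW (∑ i ∈ s, F i) u = ∑ i ∈ s, coeffW (F i) u := by
  rw [coeffW, MonoidAlgebra.coeff_sum, Finsupp.finset_sum_apply]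
  rfl

end Aux2
section Aux3
variable {k J X : Type*} [CommRing k] [LinearOrder J] [LinearOrder X]

lemma lexJ_trans {a b c : List J} (h1 : List.Lex (· < ·) a b)
    (h2 : List.Lex (· < ·) b c) : List.Lex (· < ·) a c := by
  have := List.lt_iff_lex_lt (l := a) (l' := b)
  exact List.lex_trans (fun h1 h2 => lt_trans h1 h2) h1 h2

lemma lexJ_asymm {a b : List J} (h1 : List.Lex (· < ·) a b)
    (h2 : List.Lex (· < ·) b a) : False :=
  (List.Lex.asymm (· < · : J → J → Prop)).asymm _ _ h1 h2

lemma LetterLt.trans' {a b c : Letter J X} (h1 : LetterLt a b) (h2 : LetterLt b c) :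
    LetterLt a c := by
  rcases h1 with h1 | ⟨e1, h1⟩
  · rcases h2 with h2 | ⟨e2, h2⟩
    · exact Or.inl (h1.trans h2)
    · exact Or.inl (e2 ▸ h1)
  · rcases h2 with h2 | ⟨e2, h2⟩
    · exact Or.inl (e1 ▸ h2)
    · refine Or.inr ⟨e1.trans e2, ?_⟩
      rcases h1 with h1 | ⟨l1, h1⟩ <;> rcases h2 with h2 | ⟨l2, h2⟩
      · exact Or.inl (h1.trans h2)
      · exact Or.inl (l2 ▸ h1)
      · exact Or.inl (l1 ▸ h2)
      · exact Or.inr ⟨l1.trans l2, lexJ_trans h1 h2⟩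

lemma LetterLt.asymm' {a b : Letter J X} (h1 : LetterLt a b) (h2 : LetterLt b a) : False := by
  rcases h1 with h1 | ⟨e1, h1⟩ <;> rcases h2 with h2 | ⟨e2, h2⟩
  · exact lt_asymm h1 h2
  · exact absurd (e2 ▸ h1) (lt_irrefl _)
  · exact absurd (e1 ▸ h2) (lt_irrefl _)
  · rcases h1 with h1 | ⟨l1, h1⟩ <;> rcases h2 with h2 | ⟨l2, h2⟩
    · exact lt_asymm h1 h2
    · exact absurd (l2 ▸ h1) (lt_irrefl _)
    · exact absurd (l1 ▸ h2) (lt_irrefl _)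
    · exact lexJ_asymm h1 h2

instance : IsAsymm (Letter J X) LetterLt := ⟨fun _ _ h1 h2 => LetterLt.asymm' h1 h2⟩

lemma DegLexLt.asymm' {u v : List (Letter J X)} (h1 : DegLexLt u v) (h2 : DegLexLt v u) :
    False := by
  rcases h1 with h1 | ⟨e1, h1⟩ <;> rcases h2 with h2 | ⟨e2, h2⟩
  · omega
  · omega
  · omega
  · exact (@List.Lex.asymm _ LetterLt ⟨fun _ _ h1 h2 => LetterLt.asymm' h1 h2⟩).asymm _ _ h1 h2

lemma DegLexLt.irrefl' {u : List (Letter J X)} (h : DegLexLt u u) : False := h.asymm' h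

lemma DegLexLt.ne' {u v : List (Letter J X)} (h : DegLexLt u v) : u ≠ v := by
  rintro rfl; exact h.irrefl'

/-- prepending `j` to the first letter's operators makes the letter larger -/
lemma letterLt_self_cons (j : J) (c : Letter J X) : LetterLt c (j :: c.1, c.2) :=
  Or.inr ⟨rfl, Or.inl (by simp)⟩

lemma letterLt_cons_cons {c d : Letter J X} (j : J) (h : LetterLt c d) :
    LetterLt ((j :: c.1, c.2) : Letter J X) (j :: d.1, d.2) := by
  rcases h with h | ⟨e, h | ⟨l, h⟩⟩
  · exact Or.inl h
  · exact Or.inr ⟨e, Or.inl (by simpa using h)⟩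
  · exact Or.inr ⟨e, Or.inr ⟨by simpa using l, List.Lex.cons h⟩⟩

lemma lex_applyAt (j : J) : ∀ {u w : List (Letter J X)} (i : ℕ),
    List.Lex LetterLt u w → List.Lex LetterLt (applyAt j i u) (applyAt j 0 w)
  | [], b :: w, i, _ => by
      obtain ⟨b1, b2⟩ := b
      rw [applyAt_nil]; exact List.Lex.nil
  | c :: u, d :: w, 0, List.Lex.rel h => by
      obtain ⟨c1, c2⟩ := c; obtain ⟨d1, d2⟩ := d
      exact List.Lex.rel (letterLt_cons_cons j h)
  | c :: u, d :: w, n+1, List.Lex.rel h => by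
      obtain ⟨c1, c2⟩ := c; obtain ⟨d1, d2⟩ := d
      exact List.Lex.rel ((h.trans' (letterLt_self_cons j (d1, d2))))
  | c :: u, _ :: w, 0, List.Lex.cons h => by
      obtain ⟨c1, c2⟩ := c
      exact List.Lex.cons h
  | c :: u, _ :: w, n+1, List.Lex.cons h => by
      obtain ⟨c1, c2⟩ := c
      exact List.Lex.rel (letterLt_self_cons j (c1, c2))

/-- O1: monotonicity of letterwise application against the head application. -/
lemma deglex_applyAt_lt {u w : List (Letter J X)} (j : J) (i : ℕ) (h : DegLexLt u w) :
    DegLexLt (applyAt j i u) (dHat [j] w) := by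
  rw [dHat_single]
  rcases h with h | ⟨e, h⟩
  · exact Or.inl (by simpa using h)
  · exact Or.inr ⟨by simpa using e, lex_applyAt j i h⟩

/-- O2: applying at a positive position is smaller than applying at the head. -/
lemma deglex_applyAt_pos {w : List (Letter J X)} (j : J) {i : ℕ} (hw : w ≠ []) (hi : 0 < i) :
    DegLexLt (applyAt j i w) (dHat [j] w) := by
  rw [dHat_single]
  cases w with
  | nil => exact absurd rfl hw
  | cons c w =>
    obtain ⟨c1, c2⟩ := c
    obtain ⟨n, rfl⟩ : ∃ n, i = n + 1 := ⟨i - 1, by omega⟩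
    refine Or.inr ⟨by simp, ?_⟩
    exact List.Lex.rel (letterLt_self_cons j (c1, c2))

lemma lex_append_right_of_length_eq : ∀ {u v : List (Letter J X)},
    u.length = v.length → List.Lex LetterLt u v →
    ∀ (b : List (Letter J X)), List.Lex LetterLt (u ++ b) (v ++ b)
  | [], _ :: _, he, _, _ => by simp at he
  | _ :: _, _ :: _, he, List.Lex.rel h, b => List.Lex.rel h
  | _ :: u, _ :: v, he, List.Lex.cons h, b =>
      List.Lex.cons (lex_append_right_of_length_eq (by simpa using he) h b)

/-- O3: compatibility of deg-lex with concatenation. -/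
lemma deglex_append {u v : List (Letter J X)} (a b : List (Letter J X)) (h : DegLexLt u v) :
    DegLexLt (a ++ u ++ b) (a ++ v ++ b) := by
  rcases h with h | ⟨e, h⟩
  · exact Or.inl (by simp; omega)
  · refine Or.inr ⟨by simp [e], ?_⟩
    rw [List.append_assoc, List.append_assoc]
    exact List.Lex.append_left _ (lex_append_right_of_length_eq e h b) a

lemma IsLT.unique {f : MonoidAlgebra k (FreeMonoid (Letter J X))} {u v : List (Letter J X)}
    (hu : IsLT f u) (hv : IsLT f v) : u = v := by
  by_contra hne
  exact DegLexLt.asymm' (hv.2 u hu.1 hne) (hu.2 v hv.1 (Ne.symm hne))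

lemma monicW_monoW (h1 : (1 : k) ≠ 0) (u : List (Letter J X)) :
    MonicW (monoW u : MonoidAlgebra k (FreeMonoid (Letter J X))) u := by
  refine ⟨⟨?_, ?_⟩, ?_⟩
  · rw [coeffW_monoW]; simpa using h1
  · intro v hv hne
    rw [coeffW_monoW] at hv
    simp [hne] at hv
  · rw [coeffW_monoW]; simp

lemma monic_nil_eq_one {s : MonoidAlgebra k (FreeMonoid (Letter J X))}
    (h : MonicW s ([] : List (Letter J X))) : s = 1 := by
  classical
  rw [MonoidAlgebra.one_def]
  ext v
  by_cases hv : v = 1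
  · subst hv
    have := h.2
    rw [coeffW] at this
    simpa [MonoidAlgebra.single_apply] using this
  · rw [MonoidAlgebra.single_apply, if_neg (fun e => hv e.symm)]
    by_contra hne
    have hc : coeffW s v.toList ≠ 0 := by
      rw [coeffW]
      simpa using hne
    have hne' : v.toList ≠ [] := by
      intro e
      exact hv (by
        have := congrArg FreeMonoid.ofList e
        simpa using this)
    have := h.1.2 v.toList hc hne'
    rcases this with h' | ⟨e, h'⟩
    · simp at h'
    · simp at e; exact hne' e

end Aux3
section Aux4
open MonoidAlgebra

variable {k J X : Type*} [CommRing k] [LinearOrder J] [LinearOrder X]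

lemma Dop_apply_sum (j : J) (f : MonoidAlgebra k (FreeMonoid (Letter J X))) :
    Dop j f = f.coeff.sum fun u c => c • derivMon j u.toList := rfl

lemma coeffW_Dop (j : J) (f : MonoidAlgebra k (FreeMonoid (Letter J X)))
    (v : List (Letter J X)) :
    coeffW (Dop j f) v = ∑ u ∈ f.coeff.support, f.coeff u * coeffW (derivMon j u.toList) v := by
  rw [coeffW, Dop_apply_sum, MonoidAlgebra.coeff_finsuppSum, Finsupp.sum_apply]
  simp [Finsupp.sum, coeffW]

lemma coeffW_derivMon (j : J) (u : List (Letter J X)) (v : List (Letter J X)) :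
    coeffW (derivMon j u : MonoidAlgebra k (FreeMonoid (Letter J X))) v =
      ∑ i ∈ Finset.range u.length, if v = applyAt j i u then (1 : k) else 0 := by
  rw [derivMon_eq, coeffW_sum]
  exact Finset.sum_congr rfl fun i _ => coeffW_monoW _ _

lemma coeffW_derivMon_eq_zero {j : J} {u v : List (Letter J X)}
    (h : ∀ i, i < u.length → v ≠ applyAt j i u) :
    coeffW (derivMon j u : MonoidAlgebra k (FreeMonoid (Letter J X))) v = 0 := by
  rw [coeffW_derivMon]
  apply Finset.sum_eq_zero
  intro i hi
  rw [if_neg (h i (Finset.mem_range.1 hi))]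

lemma monic_Dop {s : MonoidAlgebra k (FreeMonoid (Letter J X))} {sb : List (Letter J X)}
    (j : J) (hm : MonicW s sb) (hsb : sb ≠ []) : MonicW (Dop j s) (dHat [j] sb) := by
  have hcoeff : coeffW (Dop j s) (dHat [j] sb) = 1 := by
    rw [coeffW_Dop]
    rw [Finset.sum_eq_single (FreeMonoid.ofList sb)]
    · have h1 : s.coeff (FreeMonoid.ofList sb) = 1 := hm.2
      rw [h1, one_mul, FreeMonoid.toList_ofList, coeffW_derivMon]
      rw [Finset.sum_eq_single 0]
      · rw [if_pos (dHat_single j sb)]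
      · intro i _ hi
        rw [if_neg]
        intro he
        have hlt2 : DegLexLt (applyAt j i sb) (dHat [j] sb) :=
          deglex_applyAt_pos j hsb (Nat.pos_of_ne_zero hi)
        exact hlt2.ne' he.symm
      · intro h0
        exfalso
        apply h0
        rw [Finset.mem_range]
        exact List.length_pos_iff.2 hsb
    · intro u hu hne
      have hlt : DegLexLt u.toList sb := by
        refine hm.1.2 u.toList ?_ ?_
        · rw [coeffW]
          simpa [FreeMonoid.ofList_toList] using Finsupp.mem_support_iff.1 hu
        · intro e
          exact hne (by rw [← e, FreeMonoid.ofList_toList])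
      rw [coeffW_derivMon_eq_zero, mul_zero]
      intro i _ he
      exact (deglex_applyAt_lt j i hlt).ne' he.symm
    · intro hns
      rw [Finsupp.notMem_support_iff.1 hns, zero_mul]
  have hne1 : (1 : k) ≠ 0 := fun e => hm.1.1 (by rw [hm.2, e])
  refine ⟨⟨by rw [hcoeff]; exact hne1, ?_⟩, hcoeff⟩
  intro v hv hne
  rw [coeffW_Dop] at hv
  obtain ⟨u, hu, hterm⟩ := Finset.exists_ne_zero_of_sum_ne_zero hv
  have hdm : coeffW (derivMon j u.toList : MonoidAlgebra k (FreeMonoid (Letter J X))) v ≠ 0 :=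
    fun e => hterm (by rw [e, mul_zero])
  rw [coeffW_derivMon] at hdm
  obtain ⟨i, hi, hite⟩ := Finset.exists_ne_zero_of_sum_ne_zero hdm
  have hveq : v = applyAt j i u.toList := by
    by_contra hvne
    exact hite (if_neg hvne)
  by_cases he : u.toList = sb
  · subst hveq
    rw [he] at hne ⊢
    rcases Nat.eq_zero_or_pos i with rfl | hpos
    · exact absurd (dHat_single j sb).symm hne
    · exact deglex_applyAt_pos j hsb hpos
  · have hlt : DegLexLt u.toList sb := by
      refine hm.1.2 u.toList ?_ he
      rw [coeffW]
      simpa [FreeMonoid.ofList_toList] using Finsupp.mem_support_iff.1 hu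
    exact hveq ▸ deglex_applyAt_lt j i hlt

lemma monic_Dops {s : MonoidAlgebra k (FreeMonoid (Letter J X))} {sb : List (Letter J X)}
    (jb : List J) (hm : MonicW s sb) (hsb : sb ≠ []) : MonicW (Dops jb s) (dHat jb sb) := by
  induction jb with
  | nil => simpa using hm
  | cons j jb ih =>
    rw [Dops_cons, dHat_cons]
    exact monic_Dop j ih (dHat_ne_nil hsb)

lemma monoW_mul_mul (a b : List (Letter J X)) (f : MonoidAlgebra k (FreeMonoid (Letter J X))) :
    monoW a * f * monoW b =
      MonoidAlgebra.mapDomain (fun v => FreeMonoid.ofList a * v * FreeMonoid.ofList b) f := by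
  induction f using MonoidAlgebra.induction_linear with
  | zero => simp
  | add p q hp hq => rw [mul_add, add_mul, hp, hq, MonoidAlgebra.mapDomain_add]
  | single u c =>
    rw [monoW, monoW, MonoidAlgebra.single_mul_single, MonoidAlgebra.single_mul_single,
      MonoidAlgebra.mapDomain_single, one_mul, mul_one]

lemma mulmul_inj (a b : List (Letter J X)) :
    Function.Injective (fun v : FreeMonoid (Letter J X) =>
      FreeMonoid.ofList a * v * FreeMonoid.ofList b) := by
  intro x y h
  simp only at h
  exact mul_left_cancel (mul_right_cancel h)

lemma coeffW_mulmul (a b v : List (Letter J X))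
    (f : MonoidAlgebra k (FreeMonoid (Letter J X))) :
    coeffW (monoW a * f * monoW b) (a ++ v ++ b) = coeffW f v := by
  rw [monoW_mul_mul, coeffW, coeffW]
  have he : FreeMonoid.ofList (a ++ v ++ b)
      = FreeMonoid.ofList a * FreeMonoid.ofList v * FreeMonoid.ofList b := by
    simp [FreeMonoid.ofList_append, mul_assoc]
  rw [he]
  exact Finsupp.mapDomain_apply (mulmul_inj a b) f.coeff _

lemma coeffW_mulmul_ne_zero {a b t : List (Letter J X)}
    {f : MonoidAlgebra k (FreeMonoid (Letter J X))}
    (h : coeffW (monoW a * f * monoW b) t ≠ 0) :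
    ∃ v, coeffW f v ≠ 0 ∧ t = a ++ v ++ b := by
  classical
  rw [monoW_mul_mul, coeffW] at h
  have hmem := Finsupp.mem_support_iff.2 h
  have hsub := Finsupp.mapDomain_support (f := fun v : FreeMonoid (Letter J X) =>
    FreeMonoid.ofList a * v * FreeMonoid.ofList b) (s := f.coeff) hmem
  obtain ⟨u, hu, he⟩ := Finset.mem_image.1 hsub
  refine ⟨u.toList, ?_, ?_⟩
  · rw [coeffW]
    simpa [FreeMonoid.ofList_toList] using Finsupp.mem_support_iff.1 hu
  · have := congrArg FreeMonoid.toList he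
    simpa [FreeMonoid.toList_ofList] using this.symm

lemma monic_mulmul {h : MonoidAlgebra k (FreeMonoid (Letter J X))} {u : List (Letter J X)}
    (a b : List (Letter J X)) (hm : MonicW h u) :
    MonicW (monoW a * h * monoW b) (a ++ u ++ b) := by
  have hc : coeffW (monoW a * h * monoW b) (a ++ u ++ b) = 1 := by
    rw [coeffW_mulmul, hm.2]
  have hne1 : (1 : k) ≠ 0 := fun e => hm.1.1 (by rw [hm.2, e])
  refine ⟨⟨by rw [hc]; exact hne1, ?_⟩, hc⟩
  intro t ht htne
  obtain ⟨v, hv, rfl⟩ := coeffW_mulmul_ne_zero ht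
  have hvne : v ≠ u := fun e => htne (by rw [e])
  exact deglex_append a b (hm.1.2 v hv hvne)

lemma monic_sdword {s : MonoidAlgebra k (FreeMonoid (Letter J X))} {sb : List (Letter J X)}
    (a b : List (Letter J X)) (jb : List J) (hm : MonicW s sb) (hsb : sb ≠ []) :
    MonicW (monoW a * Dops jb s * monoW b) (a ++ dHat jb sb ++ b) :=
  monic_mulmul a b (monic_Dops jb hm hsb)

end Aux4
section Aux5
open MonoidAlgebra

variable {k J X : Type*} [CommRing k] [LinearOrder J] [LinearOrder X]
variable {S : Set (MonoidAlgebra k (FreeMonoid (Letter J X)))}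

lemma trivMod_gen {s : MonoidAlgebra k (FreeMonoid (Letter J X))} {sb : List (Letter J X)}
    (hs : s ∈ S) (hm : MonicW s sb) (hsb : sb ≠ []) (a b : List (Letter J X)) (jb : List J)
    {w : List (Letter J X)} (hlt : DegLexLt (a ++ dHat jb sb ++ b) w) :
    TrivMod S w (monoW a * Dops jb s * monoW b) := by
  apply Submodule.subset_span
  exact ⟨⟨a, b, jb, s, hs, rfl⟩, a ++ dHat jb sb ++ b, (monic_sdword a b jb hm hsb).1, hlt⟩

lemma posL (j : J) {m : ℕ} {a : List (Letter J X)} (u b : List (Letter J X))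
    (hm : m < a.length) :
    applyAt j m a ++ u ++ b = applyAt j m (a ++ u ++ b) := by
  rw [applyAt_append_left j m (a ++ u) b (by simp; omega), applyAt_append_left j m a u hm]

lemma posM (j : J) {u : List (Letter J X)} (a b : List (Letter J X)) (hu : u ≠ []) :
    a ++ applyAt j 0 u ++ b = applyAt j a.length (a ++ u ++ b) := by
  rw [applyAt_append_left j a.length (a ++ u) b
      (by simp [List.length_pos_iff.2 hu]),
    show a.length = a.length + 0 from rfl, applyAt_append_right j a 0 u]

lemma posR (j : J) (m : ℕ) (a u b : List (Letter J X)) :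
    a ++ u ++ applyAt j m b = applyAt j ((a ++ u).length + m) (a ++ u ++ b) := by
  rw [applyAt_append_right j (a ++ u) m b]

lemma Dop_mulmul (i : J) (a b : List (Letter J X))
    (h : MonoidAlgebra k (FreeMonoid (Letter J X))) :
    Dop i (monoW a * h * monoW b) =
      (∑ m ∈ Finset.range a.length, monoW (applyAt i m a) * h * monoW b)
      + monoW a * Dop i h * monoW b
      + ∑ m ∈ Finset.range b.length, monoW a * h * monoW (applyAt i m b) := by
  rw [Dop_mul, Dop_mul, Dop_monoW, Dop_monoW, derivMon_eq, derivMon_eq,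
    Finset.sum_mul, add_mul, Finset.sum_mul, Finset.mul_sum]

lemma Dops_one_or (jb : List J) :
    Dops jb (1 : MonoidAlgebra k (FreeMonoid (Letter J X))) = 1 ∨
    Dops jb (1 : MonoidAlgebra k (FreeMonoid (Letter J X))) = 0 := by
  induction jb with
  | nil => exact Or.inl rfl
  | cons j jb ih =>
    rcases ih with h | h <;> rw [Dops_cons, h]
    · exact Or.inr (Dop_one j)
    · exact Or.inr (map_zero _)

/-- The span of generators with leading term below `w` is mapped by `Dop j` into the
span of generators with leading term below `dHat [j] w`. -/
lemma trivMod_Dop (hS : ∀ s ∈ S, ∃ sb, MonicW s sb) (j : J)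
    {w : List (Letter J X)} {h : MonoidAlgebra k (FreeMonoid (Letter J X))}
    (hh : TrivMod S w h) : TrivMod S (dHat [j] w) (Dop j h) := by
  refine Submodule.span_induction ?_ ?_ ?_ ?_ hh
  · rintro g ⟨⟨a, b, jb, s, hs, rfl⟩, l, hl, hlw⟩
    obtain ⟨sb, hm⟩ := hS s hs
    by_cases hsb : sb = []
    · subst hsb
      have hs1 : s = 1 := monic_nil_eq_one hm
      cases jb with
      | cons j' jb' =>
        exfalso
        have : Dops (j' :: jb') s = 0 := by
          rw [hs1]
          rcases Dops_one_or (k := k) (X := X) (j' :: jb') with h1 | h1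
          · rw [Dops_cons] at h1 ⊢
            rcases Dops_one_or (k := k) (X := X) jb' with h2 | h2 <;> rw [h2]
            · exact Dop_one j'
            · exact map_zero _
          · exact h1
        rw [this, mul_zero, zero_mul] at hl
        exact hl.1 (coeffW_zero l)
      | nil =>
        have hne1 : (1 : k) ≠ 0 := fun e => hm.1.1 (by rw [hm.2, e])
        have hg : monoW a * Dops ([] : List J) s * monoW b
            = (monoW (a ++ b) : MonoidAlgebra k (FreeMonoid (Letter J X))) := by
          rw [Dops_nil, hs1, mul_one, ← monoW_append]
        have hlab : l = a ++ b := IsLT.unique hl (hg ▸ (monicW_monoW hne1 (a ++ b)).1)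
        rw [hg, Dop_monoW, derivMon_eq]
        apply Submodule.sum_mem
        intro m _
        apply Submodule.subset_span
        refine ⟨⟨applyAt j m (a ++ b), [], [], s, hs, ?_⟩,
          applyAt j m (a ++ b), (monicW_monoW hne1 _).1, ?_⟩
        · rw [Dops_nil, hs1, mul_one, monoW_nil, mul_one]
        · exact hlab ▸ deglex_applyAt_lt j m hlw
    · have hmg := monic_sdword a b jb hm hsb
      have hleq : l = a ++ dHat jb sb ++ b := IsLT.unique hl hmg.1
      subst hleq
      rw [Dop_mulmul]
      refine Submodule.add_mem _ (Submodule.add_mem _ ?_ ?_) ?_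
      · apply Submodule.sum_mem
        intro m hmr
        refine trivMod_gen hs hm hsb _ b jb ?_
        rw [posL j (dHat jb sb) b (Finset.mem_range.1 hmr)]
        exact deglex_applyAt_lt j m hlw
      · rw [show Dop j (Dops jb s) = Dops (j :: jb) s from rfl]
        refine trivMod_gen hs hm hsb a b (j :: jb) ?_
        rw [dHat_cons, dHat_single, posM j a b (dHat_ne_nil hsb)]
        exact deglex_applyAt_lt j _ hlw
      · apply Submodule.sum_mem
        intro m _
        refine trivMod_gen hs hm hsb a _ jb ?_
        rw [posR j m a (dHat jb sb) b]
        exact deglex_applyAt_lt j _ hlw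
  · rw [map_zero]; exact Submodule.zero_mem _
  · intro x y _ _ hx hy; rw [map_add]; exact Submodule.add_mem _ hx hy
  · intro c x _ hx; rw [map_smul]; exact Submodule.smul_mem _ c hx

/-- E1: derivation of an `(S,D)`-word with nonempty left factor, modulo lower terms. -/
lemma trivMod_E1 {s : MonoidAlgebra k (FreeMonoid (Letter J X))} {sb : List (Letter J X)}
    (hs : s ∈ S) (hm : MonicW s sb) (hsb : sb ≠ []) (i : J) (c : Letter J X)
    (a' b : List (Letter J X)) (jb : List J) :
    TrivMod S (dHat [i] ((c :: a') ++ dHat jb sb ++ b))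
      (Dop i (monoW (c :: a') * Dops jb s * monoW b)
        - monoW (applyAt i 0 (c :: a')) * Dops jb s * monoW b) := by
  set L := (c :: a') ++ dHat jb sb ++ b with hL
  have hLne : L ≠ [] := by simp [hL]
  rw [Dop_mulmul]
  rw [show (c :: a').length = a'.length + 1 from rfl, Finset.sum_range_succ']
  have heq : (∑ m ∈ Finset.range a'.length,
        monoW (applyAt i (m + 1) (c :: a')) * Dops jb s * monoW b)
      + monoW (applyAt i 0 (c :: a')) * Dops jb s * monoW b
      + monoW (c :: a') * Dop i (Dops jb s) * monoW b
      + (∑ m ∈ Finset.range b.length,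
        monoW (c :: a') * Dops jb s * monoW (applyAt i m b))
      - monoW (applyAt i 0 (c :: a')) * Dops jb s * monoW b
      = (∑ m ∈ Finset.range a'.length,
        monoW (applyAt i (m + 1) (c :: a')) * Dops jb s * monoW b)
      + monoW (c :: a') * Dop i (Dops jb s) * monoW b
      + (∑ m ∈ Finset.range b.length,
        monoW (c :: a') * Dops jb s * monoW (applyAt i m b)) := by abel
  rw [heq]
  refine Submodule.add_mem _ (Submodule.add_mem _ ?_ ?_) ?_
  · apply Submodule.sum_mem
    intro m hmr
    have hm' : m + 1 < (c :: a').length := by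
      simpa using Nat.succ_lt_succ (Finset.mem_range.1 hmr)
    refine trivMod_gen hs hm hsb _ b jb ?_
    rw [posL i (dHat jb sb) b hm']
    exact deglex_applyAt_pos i hLne (Nat.succ_pos m)
  · rw [show Dop i (Dops jb s) = Dops (i :: jb) s from rfl]
    refine trivMod_gen hs hm hsb (c :: a') b (i :: jb) ?_
    rw [dHat_cons, dHat_single, posM i (c :: a') b (dHat_ne_nil hsb)]
    exact deglex_applyAt_pos i hLne (Nat.succ_pos _)
  · apply Submodule.sum_mem
    intro m _
    refine trivMod_gen hs hm hsb (c :: a') _ jb ?_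
    rw [posR i m (c :: a') (dHat jb sb) b]
    exact deglex_applyAt_pos i hLne (Nat.add_pos_left (by simp) m)

/-- E2: derivation of an `(S,D)`-word with empty left factor, modulo lower terms. -/
lemma trivMod_E2 {s : MonoidAlgebra k (FreeMonoid (Letter J X))} {sb : List (Letter J X)}
    (hs : s ∈ S) (hm : MonicW s sb) (hsb : sb ≠ []) (i : J)
    (b : List (Letter J X)) (jb : List J) :
    TrivMod S (dHat [i] (dHat jb sb ++ b))
      (Dop i (Dops jb s * monoW b) - Dops (i :: jb) s * monoW b) := by
  rw [Dop_mul, Dop_monoW, derivMon_eq, show Dop i (Dops jb s) = Dops (i :: jb) s from rfl]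
  have heq : Dops (i :: jb) s * monoW b
        + Dops jb s * (∑ m ∈ Finset.range b.length, (monoW (applyAt i m b) :
            MonoidAlgebra k (FreeMonoid (Letter J X))))
        - Dops (i :: jb) s * monoW b
      = ∑ m ∈ Finset.range b.length, Dops jb s * monoW (applyAt i m b) := by
    rw [Finset.mul_sum]; abel
  rw [heq]
  apply Submodule.sum_mem
  intro m _
  have h1 : Dops jb s * monoW (applyAt i m b)
      = monoW [] * Dops jb s * monoW (applyAt i m b) := by rw [monoW_nil, one_mul]
  rw [h1]
  refine trivMod_gen hs hm hsb [] _ jb ?_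
  rw [List.nil_append, show dHat jb sb ++ applyAt i m b
      = applyAt i ((dHat jb sb).length + m) (dHat jb sb ++ b) from
    applyAt_append_right i (dHat jb sb) m b ▸ rfl]
  have : dHat jb sb ++ b ≠ [] := by simp [dHat_ne_nil hsb]
  exact deglex_applyAt_pos i this (by
    have : 0 < (dHat jb sb).length := List.length_pos_iff.2 (dHat_ne_nil hsb)
    omega)

end Aux5
section Aux6
open MonoidAlgebra

variable {k J X : Type*} [CommRing k] [LinearOrder J] [LinearOrder X]
variable {S : Set (MonoidAlgebra k (FreeMonoid (Letter J X)))}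

lemma derived1 (hS : ∀ s ∈ S, ∃ sb, MonicW s sb) (hgsb : IsGSB S) :
    ∀ (ib : List J) {f g : MonoidAlgebra k (FreeMonoid (Letter J X))}
      {fb gb : List (Letter J X)}, f ∈ S → g ∈ S → MonicW f fb → MonicW g gb →
    ∀ (a b : List (Letter J X)) (jb : List J), fb ≠ [] → gb ≠ [] →
    dHat ib fb = a ++ dHat jb gb ++ b →
    TrivMod S (dHat ib fb) (Dops ib f - monoW a * Dops jb g * monoW b) := by
  intro ib
  induction ib with
  | nil =>
    intro f g fb gb hf hg hmf hmg a b jb hfb hgb heq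
    rw [dHat_nil_ops] at heq ⊢
    rw [Dops_nil]
    exact (hgsb f hf g hg fb gb hmf hmg).1 a b jb hgb heq
  | cons i ib ih =>
    intro f g fb gb hf hg hmf hmg a b jb hfb hgb heq
    obtain ⟨⟨f1, f2⟩, ft, rfl⟩ : ∃ c t, fb = c :: t := by
      cases fb with
      | nil => exact absurd rfl hfb
      | cons c t => exact ⟨c, t, rfl⟩
    cases a with
    | cons c a' =>
      rw [show dHat (i :: ib) ((f1, f2) :: ft) = (i :: (ib ++ f1), f2) :: ft from rfl,
        List.cons_append, List.cons_append] at heq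
      injection heq with h1 h2
      set c' : Letter J X := (ib ++ f1, f2) with hc'
      have hfb' : dHat ib ((f1, f2) :: ft) = (c' :: a') ++ dHat jb gb ++ b := by
        rw [show dHat ib ((f1, f2) :: ft) = (ib ++ f1, f2) :: ft from rfl,
          List.cons_append, List.cons_append, h2]
      have T := ih hf hg hmf hmg (c' :: a') b jb (by simp) hgb hfb'
      have hA : TrivMod S (dHat (i :: ib) ((f1, f2) :: ft))
          (Dop i (Dops ib f - monoW (c' :: a') * Dops jb g * monoW b)) := by
        rw [dHat_cons]
        exact trivMod_Dop hS i T
      have hB := trivMod_E1 hg hmg hgb i c' a' b jb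
      rw [← hfb', ← dHat_cons] at hB
      have hkey : Dops (i :: ib) f - monoW ((i :: (ib ++ f1), f2) :: a') * Dops jb g * monoW b
          = (Dops ib f - monoW (c' :: a') * Dops jb g * monoW b |> Dop i)
            + (Dop i (monoW (c' :: a') * Dops jb g * monoW b)
                - monoW (applyAt i 0 (c' :: a')) * Dops jb g * monoW b) := by
        rw [map_sub, show applyAt i 0 (c' :: a') = (i :: (ib ++ f1), f2) :: a' from rfl,
          show Dop i (Dops ib f) = Dops (i :: ib) f from rfl]
        abel
      rw [← h1, hkey]
      exact Submodule.add_mem _ hA hB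
    | nil =>
      cases jb with
      | nil =>
        rw [List.nil_append, dHat_nil_ops] at heq
        have := (hgsb f hf g hg ((f1, f2) :: ft) gb hmf hmg).2.1 (i :: ib) b hfb heq
        rw [monoW_nil, Dops_nil, one_mul]
        exact this
      | cons j' jb' =>
        obtain ⟨⟨g1, g2⟩, gt, rfl⟩ : ∃ c t, gb = c :: t := by
          cases gb with
          | nil => exact absurd rfl hgb
          | cons c t => exact ⟨c, t, rfl⟩
        rw [List.nil_append,
          show dHat (i :: ib) ((f1, f2) :: ft) = (i :: (ib ++ f1), f2) :: ft from rfl,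
          show dHat (j' :: jb') ((g1, g2) :: gt) = ((j' :: jb') ++ g1, g2) :: gt from rfl,
          List.cons_append] at heq
        injection heq with h1 h2
        have h1' : i :: (ib ++ f1) = j' :: (jb' ++ g1) ∧ f2 = g2 := by
          constructor
          · exact congrArg Prod.fst h1
          · exact congrArg Prod.snd h1
        obtain ⟨h1a, h1b⟩ := h1'
        injection h1a with hij hof
        subst hij
        have hfb' : dHat ib ((f1, f2) :: ft) = [] ++ dHat jb' ((g1, g2) :: gt) ++ b := by
          rw [show dHat ib ((f1, f2) :: ft) = (ib ++ f1, f2) :: ft from rfl,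
            show dHat jb' ((g1, g2) :: gt) = (jb' ++ g1, g2) :: gt from rfl,
            List.nil_append, List.cons_append, h2, hof, h1b]
        have T := ih hf hg hmf hmg [] b jb' hfb hgb hfb'
        rw [monoW_nil, one_mul] at T
        have hA : TrivMod S (dHat (i :: ib) ((f1, f2) :: ft))
            (Dop i (Dops ib f - Dops jb' g * monoW b)) := by
          rw [dHat_cons]
          exact trivMod_Dop hS i T
        have hB := trivMod_E2 hg hmg hgb i b jb'
        rw [show dHat jb' ((g1, g2) :: gt) ++ b
            = [] ++ dHat jb' ((g1, g2) :: gt) ++ b from (List.nil_append _).symm,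
          ← hfb', ← dHat_cons] at hB
        have hkey : Dops (i :: ib) f - monoW [] * Dops (i :: jb') g * monoW b
            = Dop i (Dops ib f - Dops jb' g * monoW b)
              + (Dop i (Dops jb' g * monoW b) - Dops (i :: jb') g * monoW b) := by
          rw [map_sub, monoW_nil, one_mul,
            show Dop i (Dops ib f) = Dops (i :: ib) f from rfl]
          abel
        rw [hkey]
        exact Submodule.add_mem _ hA hB

lemma derived2 (hS : ∀ s ∈ S, ∃ sb, MonicW s sb) (hgsb : IsGSB S) :
    ∀ (ib : List J) {f g : MonoidAlgebra k (FreeMonoid (Letter J X))}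
      {fb gb : List (Letter J X)}, f ∈ S → g ∈ S → MonicW f fb → MonicW g gb →
    ∀ (a b : List (Letter J X)) (jb : List J), a ≠ [] → b ≠ [] → fb ≠ [] → gb ≠ [] →
    dHat ib fb ++ b = a ++ dHat jb gb →
    (dHat ib fb ++ b).length < fb.length + gb.length →
    TrivMod S (dHat ib fb ++ b) (Dops ib f * monoW b - monoW a * Dops jb g) := by
  intro ib
  induction ib with
  | nil =>
    intro f g fb gb hf hg hmf hmg a b jb ha hb hfb hgb heq hlen
    rw [dHat_nil_ops] at heq hlen ⊢
    rw [Dops_nil]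
    exact (hgsb f hf g hg fb gb hmf hmg).2.2 a b jb ha hb hfb hgb heq hlen
  | cons i ib ih =>
    intro f g fb gb hf hg hmf hmg a b jb ha hb hfb hgb heq hlen
    obtain ⟨⟨f1, f2⟩, ft, rfl⟩ : ∃ c t, fb = c :: t := by
      cases fb with
      | nil => exact absurd rfl hfb
      | cons c t => exact ⟨c, t, rfl⟩
    obtain ⟨c, a', rfl⟩ : ∃ c t, a = c :: t := by
      cases a with
      | nil => exact absurd rfl ha
      | cons c t => exact ⟨c, t, rfl⟩
    rw [show dHat (i :: ib) ((f1, f2) :: ft) = (i :: (ib ++ f1), f2) :: ft from rfl,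
      List.cons_append, List.cons_append] at heq
    injection heq with h1 h2
    set c' : Letter J X := (ib ++ f1, f2) with hc'
    have hW' : dHat ib ((f1, f2) :: ft) ++ b = (c' :: a') ++ dHat jb gb := by
      rw [show dHat ib ((f1, f2) :: ft) = (ib ++ f1, f2) :: ft from rfl,
        List.cons_append, List.cons_append, h2]
    have hlen' : (dHat ib ((f1, f2) :: ft) ++ b).length
        < ((f1, f2) :: ft).length + gb.length := by
      simpa using hlen
    have T := ih hf hg hmf hmg (c' :: a') b jb (by simp) hb hfb hgb hW' hlen'
    have hWeq : dHat (i :: ib) ((f1, f2) :: ft) ++ b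
        = dHat [i] (dHat ib ((f1, f2) :: ft) ++ b) := by
      rw [dHat_append [i] b (dHat_ne_nil (jb := ib) hfb), ← dHat_cons]
    have hA : TrivMod S (dHat (i :: ib) ((f1, f2) :: ft) ++ b)
        (Dop i (Dops ib f * monoW b - monoW (c' :: a') * Dops jb g)) := by
      rw [hWeq]
      exact trivMod_Dop hS i T
    have hB := trivMod_E2 hf hmf hfb i b ib
    rw [dHat_append [i] b (dHat_ne_nil (jb := ib) hfb), ← dHat_cons] at hB
    have hC := trivMod_E1 hg hmg hgb i c' a' [] jb
    rw [List.append_nil, monoW_nil, mul_one, mul_one, ← hW', hWeq.symm] at hC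
    have hkey : Dops (i :: ib) f * monoW b - monoW ((i :: (ib ++ f1), f2) :: a') * Dops jb g
        = Dop i (Dops ib f * monoW b - monoW (c' :: a') * Dops jb g)
          - (Dop i (Dops ib f * monoW b) - Dops (i :: ib) f * monoW b)
          + (Dop i (monoW (c' :: a') * Dops jb g)
              - monoW (applyAt i 0 (c' :: a')) * Dops jb g) := by
      rw [map_sub, show applyAt i 0 (c' :: a') = (i :: (ib ++ f1), f2) :: a' from rfl]
      abel
    rw [← h1, hkey]
    exact Submodule.add_mem _ (Submodule.sub_mem _ hA hB) hC

lemma trivMod_of_forall_lt {g : MonoidAlgebra k (FreeMonoid (Letter J X))}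
    (hg1 : g ∈ S) (hgone : g = 1) (hone : (1 : k) ≠ 0) {w : List (Letter J X)}
    {h : MonoidAlgebra k (FreeMonoid (Letter J X))}
    (hlt : ∀ v, coeffW h v ≠ 0 → DegLexLt v w) : TrivMod S w h := by
  have hrep : h = h.coeff.sum fun u c =>
      c • (monoW u.toList : MonoidAlgebra k (FreeMonoid (Letter J X))) := by
    conv_lhs => rw [← MonoidAlgebra.ofCoeff_coeff h, ← Finsupp.sum_single h.coeff,
      MonoidAlgebra.ofCoeff_finsuppSum]
    apply Finsupp.sum_congr
    intro u _
    rw [MonoidAlgebra.ofCoeff_single, monoW, FreeMonoid.ofList_toList, MonoidAlgebra.smul_single', mul_one]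
  rw [hrep, Finsupp.sum]
  apply Submodule.sum_mem
  intro u hu
  apply Submodule.smul_mem
  apply Submodule.subset_span
  refine ⟨⟨u.toList, [], [], g, hg1, ?_⟩, u.toList, (monicW_monoW hone _).1, ?_⟩
  · rw [hgone, Dops_nil, mul_one, monoW_nil, mul_one]
  · apply hlt
    rw [coeffW, FreeMonoid.ofList_toList]
    exact Finsupp.mem_support_iff.1 hu

end Aux6
/-- `S` is a Gröbner–Shirshov basis iff all the derived overlaps (with operators also
applied to `f`) are trivial modulo `(S, w)`. -/
theorem stmt10 [LinearOrder J] [LinearOrder X]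
    [IsWellOrder J (· < ·)] [IsWellOrder X (· < ·)]
    (S : Set (MonoidAlgebra k (FreeMonoid (Letter J X))))
    (hS : ∀ s ∈ S, ∃ sb, MonicW s sb) :
    IsGSB S ↔ ∀ f ∈ S, ∀ g ∈ S, ∀ fb gb, MonicW f fb → MonicW g gb →
      (∀ a b ib jb, fb ≠ [] → gb ≠ [] → dHat ib fb = a ++ dHat jb gb ++ b →
        TrivMod S (dHat ib fb) (Dops ib f - monoW a * Dops jb g * monoW b)) ∧
      (∀ a b ib jb, a ≠ [] → b ≠ [] → fb ≠ [] → gb ≠ [] →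
        dHat ib fb ++ b = a ++ dHat jb gb →
        (dHat ib fb ++ b).length < fb.length + gb.length →
        TrivMod S (dHat ib fb ++ b) (Dops ib f * monoW b - monoW a * Dops jb g)) := by
  constructor
  · intro hgsb f hf g hg fb gb hmf hmg
    constructor
    · intro a b ib jb hfb hgb heq
      exact derived1 hS hgsb ib hf hg hmf hmg a b jb hfb hgb heq
    · intro a b ib jb ha hb hfb hgb heq hlen
      exact derived2 hS hgsb ib hf hg hmf hmg a b jb ha hb hfb hgb heq hlen
  · intro hder f hf g hg fb gb hmf hmg
    refine ⟨?_, ?_, ?_⟩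
    · intro a b jb hgb heq
      have hfb : fb ≠ [] := by
        rw [heq]
        intro e
        rcases List.append_eq_nil_iff.1 e with ⟨e1, e2⟩
        rcases List.append_eq_nil_iff.1 e1 with ⟨e3, e4⟩
        exact dHat_ne_nil hgb e4
      have := (hder f hf g hg fb gb hmf hmg).1 a b [] jb hfb hgb
        (by rw [dHat_nil_ops]; exact heq)
      rw [dHat_nil_ops, Dops_nil] at this
      exact this
    · intro ib b hfb heq
      by_cases hgb : gb = []
      · subst hgb
        rw [List.nil_append] at heq
        have hone : g = 1 := monic_nil_eq_one hmg
        have hmon := monic_Dops ib hmf hfb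
        apply trivMod_of_forall_lt hg hone (fun e => hmg.1.1 (by rw [hmg.2, e]))
        intro v hv
        rw [hone, one_mul, ← heq, coeffW_sub, coeffW_monoW] at hv
        by_cases hveq : v = dHat ib fb
        · exfalso
          rw [if_pos hveq, hveq, hmon.2, sub_self] at hv
          exact hv rfl
        · rw [if_neg hveq, sub_zero] at hv
          exact hmon.1.2 v hv hveq
      · have := (hder f hf g hg fb gb hmf hmg).1 [] b ib [] hfb hgb
          (by rw [dHat_nil_ops, List.nil_append]; exact heq)
        rw [monoW_nil, Dops_nil, one_mul] at this
        exact this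
    · intro a b jb ha hb hfb hgb heq hlen
      have := (hder f hf g hg fb gb hmf hmg).2 a b [] jb ha hb hfb hgb
        (by rw [dHat_nil_ops]; exact heq) (by rw [dHat_nil_ops]; exact hlen)
      rw [dHat_nil_ops, Dops_nil] at this
      exact this
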